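/- In a half-full tree that is not a complete binary tree, the left child of the root is the root of the largest complete subtree in the decomposition; that is, its number of leaves is 2^{x_1} where x_1 is the highest set bit of the total leaf count l. -/

import Mathlib

/-!
A complete tree has `2 ^ depth` leaves, and a haft whose leaf count is a power of two is
complete (its right subtree must then have as many leaves as the left one). So in a
non-complete haft `node l r` we have `0 < |r| < |l| = 2 ^ d`, and the total leaf count lies
in `[2 ^ d, 2 ^ (d + 1))`.
-/

inductive BTree : Type
  | leaf : BTree
  | node : BTree → BTree → BTree
deriving DecidableEq

namespace BTree

/-- Number of leaves of a binary tree. -/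
def leaves : BTree → ℕ
  | leaf => 1
  | node l r => leaves l + leaves r

/-- Depth (height) of a binary tree. -/
def depth : BTree → ℕ
  | leaf => 0
  | node l r => max (depth l) (depth r) + 1

/-- Number of internal (non-leaf) nodes. -/
def internals : BTree → ℕ
  | leaf => 0
  | node l r => internals l + internals r + 1

/-- A complete binary tree: full, with all leaves at the same depth. -/
def IsComplete : BTree → Prop
  | leaf => True
  | node l r => IsComplete l ∧ IsComplete r ∧ depth l = depth r

/-- A half-full tree (haft): every non-leaf node has two children, and its
left child is the root of a complete subtree containing at least half of the
node's leaf-descendants. -/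
def IsHaft : BTree → Prop
  | leaf => True
  | node l r => IsComplete l ∧ leaves r ≤ leaves l ∧ IsHaft r

theorem leaves_pos (t : BTree) : 0 < t.leaves := by
  induction t with
  | leaf => exact Nat.one_pos
  | node l r ihl _ => exact Nat.add_pos_left ihl _

theorem IsComplete.leaves_eq {t : BTree} (h : IsComplete t) : t.leaves = 2 ^ t.depth := by
  induction t with
  | leaf => rfl
  | node l r ihl ihr =>
    obtain ⟨hl, hr, hd⟩ := h
    rw [leaves, depth, ihl hl, ihr hr, hd, max_self, pow_succ, mul_two]

theorem IsHaft.isComplete_of_leaves_eq_two_pow {t : BTree} (ht : IsHaft t) {n : ℕ}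
    (hn : t.leaves = 2 ^ n) : IsComplete t := by
  induction t generalizing n with
  | leaf => trivial
  | node l r _ ihr =>
    obtain ⟨hl, hle, hr⟩ := ht
    have hll := hl.leaves_eq
    have hrpos := leaves_pos r
    rw [leaves] at hn
    have hn_eq : n = l.depth + 1 := by
      have hlt : 2 ^ l.depth < 2 ^ n := by omega
      have hle' : 2 ^ n ≤ 2 ^ (l.depth + 1) := by rw [pow_succ]; omega
      have := (Nat.pow_lt_pow_iff_right (by norm_num)).mp hlt
      have := (Nat.pow_le_pow_iff_right (by norm_num)).mp hle'
      omega
    have hrl : r.leaves = 2 ^ l.depth := by rw [hn_eq, pow_succ] at hn; omega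
    have hrc : IsComplete r := ihr hr hrl
    exact ⟨hl, hrc, Nat.pow_right_injective le_rfl (hrl.symm.trans hrc.leaves_eq)⟩

theorem IsHaft.leaves_right_lt_left {l r : BTree} (h : IsHaft (node l r))
    (hnc : ¬ IsComplete (node l r)) : r.leaves < l.leaves := by
  refine lt_of_le_of_ne h.2.1 fun heq =>
    hnc (h.isComplete_of_leaves_eq_two_pow (n := l.depth + 1) ?_)
  rw [leaves, heq, h.1.leaves_eq, pow_succ, mul_two]

end BTree

/-- In a non-complete haft, the left child of the root roots the largest
complete subtree: its leaf count is `2 ^ x₁` where `x₁` is the highest set bit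
of the total leaf count. -/
theorem haft_left_child_largest (l r : BTree)
    (h : BTree.IsHaft (BTree.node l r)) (hnc : ¬ BTree.IsComplete (BTree.node l r)) :
    l.leaves = 2 ^ Nat.log 2 (BTree.node l r).leaves := by
  have hll : l.leaves = 2 ^ l.depth := h.1.leaves_eq
  have hlt := h.leaves_right_lt_left hnc
  have hrpos := r.leaves_pos
  suffices Nat.log 2 (BTree.node l r).leaves = l.depth by rw [this, hll]
  apply Nat.log_eq_of_pow_le_of_lt_pow
  · rw [BTree.leaves]; omega
  · rw [BTree.leaves, pow_succ]; omega
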